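/- Let A be a positive semidefinite real D×D matrix, γ a real D×D matrix, a₀ > 0 a real number, ν a measure on ℝ^D with ∫ ‖e‖² dν(e) < ∞, and w : ℝ^D → ℝ measurable with w(e) > 0 for ν-almost every e and ∫ w(e)‖e‖² dν(e) < ∞. If the matrix A + γ (∫ e eᵀ dν(e)) γᵀ is positive definite, then the matrix a₀·A + γ (∫ w(e) e eᵀ dν(e)) γᵀ is also positive definite. -/

import Mathlib

open MeasureTheory Matrix

/-- Pointwise bound used for integrability. -/
lemma stmt5_abs_bound {D : ℕ} (e : Fin D → ℝ) (i j : Fin D) :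
    |e i * e j| ≤ 2 * ∑ k, e k ^ 2 := by
  have hi : e i ^ 2 ≤ ∑ k, e k ^ 2 :=
    Finset.single_le_sum (fun k _ => sq_nonneg (e k)) (Finset.mem_univ i)
  have hj : e j ^ 2 ≤ ∑ k, e k ^ 2 :=
    Finset.single_le_sum (fun k _ => sq_nonneg (e k)) (Finset.mem_univ j)
  nlinarith [abs_nonneg (e i * e j), sq_abs (e i * e j), sq_nonneg (|e i| - |e j|),
    abs_mul (e i) (e j), sq_abs (e i), sq_abs (e j)]

/-- Integrability of weighted second moments entrywise. -/
lemma stmt5_integrable {D : ℕ} (ν : Measure (Fin D → ℝ)) (g : (Fin D → ℝ) → ℝ)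
    (hgm : AEStronglyMeasurable g ν) (hgnn : ∀ᵐ e ∂ν, 0 ≤ g e)
    (hg2 : Integrable (fun e => g e * ∑ k, e k ^ 2) ν) (i j : Fin D) :
    Integrable (fun e => g e * (e i * e j)) ν := by
  refine Integrable.mono' (hg2.const_mul 2) ?_ ?_
  · exact hgm.mul (((measurable_pi_apply i).mul (measurable_pi_apply j)).aestronglyMeasurable)
  · filter_upwards [hgnn] with e he
    have hb := stmt5_abs_bound e i j
    have hsum : (0:ℝ) ≤ ∑ k, e k ^ 2 := Finset.sum_nonneg fun k _ => sq_nonneg (e k)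
    rw [Real.norm_eq_abs, abs_mul, abs_of_nonneg he]
    calc g e * |e i * e j| ≤ g e * (2 * ∑ k, e k ^ 2) := by
          exact mul_le_mul_of_nonneg_left hb he
      _ = 2 * (g e * ∑ k, e k ^ 2) := by ring

/-- Quadratic form of the moment matrix equals an integral. -/
lemma stmt5_quad {D : ℕ} (ν : Measure (Fin D → ℝ)) (g : (Fin D → ℝ) → ℝ)
    (hg : ∀ i j, Integrable (fun e => g e * (e i * e j)) ν) (y : Fin D → ℝ) :
    y ⬝ᵥ (Matrix.of fun i j => ∫ e, g e * (e i * e j) ∂ν) *ᵥ y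
      = ∫ e, g e * (y ⬝ᵥ e) ^ 2 ∂ν := by
  have key : ∀ e : Fin D → ℝ,
      g e * (y ⬝ᵥ e) ^ 2 = ∑ i, ∑ j, y i * (g e * (e i * e j)) * y j := by
    intro e
    rw [show (y ⬝ᵥ e) ^ 2 = ∑ i, ∑ j, (y i * e i) * (y j * e j) by
      rw [sq, dotProduct, Finset.sum_mul_sum], Finset.mul_sum]
    refine Finset.sum_congr rfl fun i _ => ?_
    rw [Finset.mul_sum]
    exact Finset.sum_congr rfl fun j _ => by ring
  calc y ⬝ᵥ (Matrix.of fun i j => ∫ e, g e * (e i * e j) ∂ν) *ᵥ y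
      = ∑ i, ∑ j, y i * (∫ e, g e * (e i * e j) ∂ν) * y j := by
        simp only [dotProduct, mulVec, Matrix.of_apply, Finset.mul_sum]
        refine Finset.sum_congr rfl fun i _ => Finset.sum_congr rfl fun j _ => by ring
    _ = ∑ i, ∑ j, ∫ e, y i * (g e * (e i * e j)) * y j ∂ν := by
        refine Finset.sum_congr rfl fun i _ => Finset.sum_congr rfl fun j _ => ?_
        rw [MeasureTheory.integral_mul_const, MeasureTheory.integral_const_mul]
    _ = ∫ e, ∑ i, ∑ j, y i * (g e * (e i * e j)) * y j ∂ν := by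
        rw [MeasureTheory.integral_finset_sum]
        · exact Finset.sum_congr rfl fun i _ =>
            (MeasureTheory.integral_finset_sum _ fun j _ =>
              (((hg i j).const_mul (y i)).mul_const (y j))).symm
        · exact fun i _ => integrable_finset_sum _ fun j _ =>
            (((hg i j).const_mul (y i)).mul_const (y j))
    _ = ∫ e, g e * (y ⬝ᵥ e) ^ 2 ∂ν := by
        exact integral_congr_ae (Filter.Eventually.of_forall fun e => (key e).symm)

/-- Let `A` be positive semidefinite, `γ` a `D×D` matrix, `a₀ > 0`, `ν` a
measure on `ℝ^D` with `∫ ‖e‖² dν < ∞`, and `w` measurable with `w > 0` ν-a.e. and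
`∫ w(e)‖e‖² dν < ∞`. If `A + γ (∫ e eᵀ dν) γᵀ` is positive definite, then
`a₀·A + γ (∫ w(e) e eᵀ dν) γᵀ` is positive definite. (Matrix integrals are entrywise;
`‖e‖²` is the squared Euclidean norm `∑ i, e i ^ 2`.) -/
theorem statement5 {D : ℕ}
    (A γ : Matrix (Fin D) (Fin D) ℝ) (hA : A.PosSemidef)
    (a₀ : ℝ) (ha₀ : 0 < a₀)
    (ν : Measure (Fin D → ℝ))
    (w : (Fin D → ℝ) → ℝ) (hw : Measurable w)
    (hwpos : ∀ᵐ e ∂ν, 0 < w e)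
    (hν2 : Integrable (fun e => ∑ i, e i ^ 2) ν)
    (hw2 : Integrable (fun e => w e * ∑ i, e i ^ 2) ν)
    (hPD : (A + γ * (Matrix.of fun i j => ∫ e, e i * e j ∂ν) * γᵀ).PosDef) :
    (a₀ • A + γ * (Matrix.of fun i j => ∫ e, w e * (e i * e j) ∂ν) * γᵀ).PosDef := by
  have hwnn : ∀ᵐ e ∂ν, 0 ≤ w e := hwpos.mono fun e he => he.le
  have hint1 : ∀ i j, Integrable (fun e => e i * e j) ν := by
    intro i j
    have := stmt5_integrable ν (fun _ => (1:ℝ)) aestronglyMeasurable_const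
      (Filter.Eventually.of_forall fun _ => zero_le_one) (by simpa using hν2) i j
    simpa using this
  have hintw : ∀ i j, Integrable (fun e => w e * (e i * e j)) ν :=
    stmt5_integrable ν w hw.aestronglyMeasurable hwnn hw2
  set Mw : Matrix (Fin D) (Fin D) ℝ := Matrix.of fun i j => ∫ e, w e * (e i * e j) ∂ν with hMw
  have hMwsymm : Mw.IsHermitian := by
    ext i j
    simp only [conjTranspose_apply, star_trivial, hMw, Matrix.of_apply]
    exact integral_congr_ae (Filter.Eventually.of_forall fun e => by dsimp only; ring)
  refine posDef_iff_dotProduct_mulVec.mpr ⟨?_, ?_⟩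
  · have hsmul : (a₀ • A).IsHermitian := by
      show (a₀ • A)ᴴ = a₀ • A
      rw [Matrix.conjTranspose_smul, hA.1]
      congr 1
    exact hsmul.add (by simpa using isHermitian_mul_mul_conjTranspose γ hMwsymm)
  · intro x hx
    set y : Fin D → ℝ := Matrix.vecMul x γ with hy
    have hform : ∀ (M : Matrix (Fin D) (Fin D) ℝ),
        x ⬝ᵥ (γ * M * γᵀ) *ᵥ x = y ⬝ᵥ M *ᵥ y := by
      intro M
      rw [← Matrix.mulVec_mulVec, ← Matrix.mulVec_mulVec, Matrix.dotProduct_mulVec,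
        Matrix.dotProduct_mulVec, hy, ← Matrix.vecMul_transpose, Matrix.transpose_transpose,
        Matrix.dotProduct_mulVec]
    -- unweighted quadratic form
    have hQ1 : x ⬝ᵥ ((A + γ * (Matrix.of fun i j => ∫ e, e i * e j ∂ν) * γᵀ)) *ᵥ x
        = x ⬝ᵥ A *ᵥ x + ∫ e, (y ⬝ᵥ e) ^ 2 ∂ν := by
      rw [Matrix.add_mulVec, dotProduct_add, hform]
      have h1 : (Matrix.of fun i j => ∫ e, e i * e j ∂ν)
          = Matrix.of fun i j => ∫ e, (fun _ => (1:ℝ)) e * (e i * e j) ∂ν := by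
        ext i j; simp
      rw [h1, stmt5_quad ν (fun _ => (1:ℝ)) (by simpa using hint1) y]
      simp
    have hQw : x ⬝ᵥ (a₀ • A + γ * Mw * γᵀ) *ᵥ x
        = a₀ * (x ⬝ᵥ A *ᵥ x) + ∫ e, w e * (y ⬝ᵥ e) ^ 2 ∂ν := by
      rw [Matrix.add_mulVec, dotProduct_add, hform, Matrix.smul_mulVec,
        dotProduct_smul, stmt5_quad ν w hintw y]
      simp [smul_eq_mul]
    have hintwq : Integrable (fun e => w e * (y ⬝ᵥ e) ^ 2) ν := by
      have : (fun e => w e * (y ⬝ᵥ e) ^ 2)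
          = fun e => ∑ i, ∑ j, y i * (w e * (e i * e j)) * y j := by
        funext e
        rw [show (y ⬝ᵥ e) ^ 2 = ∑ i, ∑ j, (y i * e i) * (y j * e j) by
          rw [sq, dotProduct, Finset.sum_mul_sum], Finset.mul_sum]
        refine Finset.sum_congr rfl fun i _ => ?_
        rw [Finset.mul_sum]
        exact Finset.sum_congr rfl fun j _ => by ring
      rw [this]
      exact integrable_finset_sum _ fun i _ => integrable_finset_sum _ fun j _ =>
        (((hintw i j).const_mul (y i)).mul_const (y j))
    have hAx : 0 ≤ x ⬝ᵥ A *ᵥ x := by simpa using hA.dotProduct_mulVec_nonneg x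
    have hwqnn : ∀ᵐ e ∂ν, 0 ≤ w e * (y ⬝ᵥ e) ^ 2 :=
      hwnn.mono fun e he => mul_nonneg he (sq_nonneg _)
    have hIw : 0 ≤ ∫ e, w e * (y ⬝ᵥ e) ^ 2 ∂ν := integral_nonneg_of_ae hwqnn
    rw [star_trivial, hQw]
    rcases lt_or_eq_of_le hIw with h | h
    · have : 0 ≤ a₀ * (x ⬝ᵥ A *ᵥ x) := mul_nonneg ha₀.le hAx
      linarith
    · -- the weighted integral is zero: then x ⬝ᵥ A *ᵥ x must be positive
      have hzero : ∀ᵐ e ∂ν, w e * (y ⬝ᵥ e) ^ 2 = 0 := by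
        have h2 := (integral_eq_zero_iff_of_nonneg_ae hwqnn hintwq).mp h.symm
        filter_upwards [h2] with e he using by simpa using he
      have hdot0 : ∀ᵐ e ∂ν, (y ⬝ᵥ e) ^ 2 = 0 := by
        filter_upwards [hzero, hwpos] with e hz hp
        rcases mul_eq_zero.mp hz with h' | h'
        · exact absurd h' hp.ne'
        · exact h'
      have hI0 : ∫ e, (y ⬝ᵥ e) ^ 2 ∂ν = 0 := by
        rw [integral_congr_ae hdot0]; simp
      have hpos := hPD.dotProduct_mulVec_pos hx
      rw [star_trivial, hQ1, hI0, add_zero] at hpos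
      rw [← h, add_zero]
      exact mul_pos ha₀ hpos
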